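/- arXiv:2602.08998 — 9 statements merged into one kernel-verified Lean document; each statement's English description precedes it below -/
import Mathlib

section
/- Let φ : X → Y be a local homeomorphism between locally compact Hausdorff spaces and let K ⊆ X be compact. Then for every y₀ ∈ Y there exist an open neighbourhood V of y₀, an integer m ≥ 0, and pairwise disjoint open sets U₁, …, U_m ⊆ X such that φ⁻¹(V) ∩ K ⊆ U₁ ∪ ⋯ ∪ U_m and for each i the restriction of φ to U_i is a homeomorphism from U_i onto V. (Lemma 2.1.3.) -/
/-!
The part of the fibre over `y₀` lying in `K` is compact and discrete, hence finite, say
`{x₁, …, x_m}`. Take charts of `φ` at the `xᵢ` with pairwise disjoint sources. The points of `K`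
outside these sources form a compact set whose image is closed and misses `y₀`; its complement,
intersected with the targets of the charts, is a neighbourhood `V` of `y₀` over which `K` lies in
the union of the sources. Cutting each chart down to `V` gives the `Uᵢ`.
-/

open Set Function

namespace IsLocalHomeomorph

variable {X Y : Type*} [TopologicalSpace X] [TopologicalSpace Y] {φ : X → Y}

theorem isDiscrete_preimage_singleton (hφ : IsLocalHomeomorph φ) (y : Y) :
    IsDiscrete (φ ⁻¹' {y}) :=
  hφ.isLocalHomeomorphOn.isDiscrete_of_image
    (subsingleton_singleton.anti (image_preimage_subset φ {y})).isDiscrete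

theorem finite_inter_preimage_singleton [T1Space Y] (hφ : IsLocalHomeomorph φ) {K : Set X}
    (hK : IsCompact K) (y : Y) : (K ∩ φ ⁻¹' {y}).Finite :=
  (hK.inter_right (isClosed_singleton.preimage hφ.continuous)).finite
    ((hφ.isDiscrete_preimage_singleton y).mono inter_subset_right)

theorem exists_charts_pairwise_disjoint_source [T2Space X] (hφ : IsLocalHomeomorph φ)
    {ι : Type*} [Finite ι] {p : ι → X} (hp : Injective p) :
    ∃ e : ι → OpenPartialHomeomorph X Y, (∀ i, p i ∈ (e i).source ∧ ⇑(e i) = φ) ∧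
      Pairwise (Disjoint on fun i ↦ (e i).source) := by
  choose e hmem he using hφ
  obtain ⟨W, hW, hWd⟩ := (finite_range p).t2_separation
  refine ⟨fun i ↦ (e (p i)).restrOpen (W (p i)) (hW (p i)).2,
    fun i ↦ ⟨⟨hmem (p i), (hW (p i)).1⟩, (he (p i)).symm⟩, fun i j hij ↦ ?_⟩
  exact (hWd (mem_range_self i) (mem_range_self j) (hp.ne hij)).mono
    inter_subset_right inter_subset_right

end IsLocalHomeomorph

theorem IsCompact.exists_isOpen_preimage_inter_subset {X Y : Type*} [TopologicalSpace X]
    [TopologicalSpace Y] [T2Space Y] {φ : X → Y} (hφ : Continuous φ) {K U : Set X}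
    (hK : IsCompact K) (hU : IsOpen U) {y : Y} (hyU : K ∩ φ ⁻¹' {y} ⊆ U) :
    ∃ V : Set Y, IsOpen V ∧ y ∈ V ∧ φ ⁻¹' V ∩ K ⊆ U := by
  refine ⟨(φ '' (K \ U))ᶜ, ((hK.diff hU).image hφ).isClosed.isOpen_compl, ?_, ?_⟩
  · rintro ⟨x, ⟨hxK, hxU⟩, rfl⟩
    exact hxU (hyU ⟨hxK, rfl⟩)
  · intro x ⟨hxV, hxK⟩
    by_contra hxU
    exact hxV ⟨x, ⟨hxK, hxU⟩, rfl⟩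

theorem OpenPartialHomeomorph.exists_source_eq_inter_preimage_target_eq {X Y : Type*}
    [TopologicalSpace X] [TopologicalSpace Y] (e : OpenPartialHomeomorph X Y) {V : Set Y}
    (hV : IsOpen V) (hVe : V ⊆ e.target) :
    ∃ e' : OpenPartialHomeomorph X Y, e'.source = e.source ∩ e ⁻¹' V ∧ e'.target = V ∧
      ⇑e' = e := by
  refine ⟨(e.symm.restrOpen V hV).symm, ?_, ?_, rfl⟩
  · simp
  · simpa using hVe

theorem localHomeomorph_fiber_cover_general {X Y : Type*} [TopologicalSpace X] [TopologicalSpace Y]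
    [T2Space X] [T2Space Y]
    (φ : X → Y) (hφ : IsLocalHomeomorph φ) (K : Set X) (hK : IsCompact K) (y₀ : Y) :
    ∃ (V : Set Y), IsOpen V ∧ y₀ ∈ V ∧
      ∃ (m : ℕ) (U : Fin m → Set X),
        (∀ i, IsOpen (U i)) ∧
        Pairwise (Function.onFun Disjoint U) ∧
        φ ⁻¹' V ∩ K ⊆ ⋃ i, U i ∧
        ∀ i, ∃ e : PartialHomeomorph X Y,
          e.source = U i ∧ e.target = V ∧ ∀ x ∈ U i, e x = φ x := by
  obtain ⟨m, p, hp, hpF⟩ := (hφ.finite_inter_preimage_singleton hK y₀).fin_param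
  obtain ⟨e, he, hdisj⟩ := hφ.exists_charts_pairwise_disjoint_source hp
  have hFe : K ∩ φ ⁻¹' {y₀} ⊆ ⋃ i, (e i).source :=
    hpF ▸ range_subset_iff.2 fun i ↦ mem_iUnion.2 ⟨i, (he i).1⟩
  obtain ⟨V₀, hV₀, hy₀V₀, hV₀K⟩ := hK.exists_isOpen_preimage_inter_subset hφ.continuous
    (isOpen_iUnion fun i ↦ (e i).open_source) hFe
  have hy₀e : ∀ i, y₀ ∈ (e i).target := fun i ↦ by
    have hpi : φ (p i) = y₀ := (hpF ▸ mem_range_self i : p i ∈ K ∩ φ ⁻¹' {y₀}).2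
    simpa [(he i).2, hpi] using (e i).map_source (he i).1
  set V := V₀ ∩ ⋂ i, (e i).target
  have hV : IsOpen V := hV₀.inter (isOpen_iInter_of_finite fun i ↦ (e i).open_target)
  choose e' he'src he'tgt he'φ using fun i ↦ (e i).exists_source_eq_inter_preimage_target_eq hV
    (inter_subset_right.trans (iInter_subset _ i))
  refine ⟨V, hV, ⟨hy₀V₀, mem_iInter.2 hy₀e⟩, m, fun i ↦ (e' i).source,
    fun i ↦ (e' i).open_source, fun i j hij ↦ ?_, ?_,
    fun i ↦ ⟨(e' i).toPartialHomeomorph, rfl, he'tgt i, fun x _ ↦ by simp [he'φ, (he i).2]⟩⟩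
  · simp only [onFun, he'src]
    exact (hdisj hij).mono inter_subset_left inter_subset_left
  · intro x hx
    obtain ⟨i, hi⟩ := mem_iUnion.1 (hV₀K ⟨hx.1.1, hx.2⟩)
    exact mem_iUnion.2 ⟨i, he'src i ▸ ⟨hi, by simpa [(he i).2] using hx.1⟩⟩

/-- **Lemma 2.1.3.** Let `φ : X → Y` be a local homeomorphism between locally compact
Hausdorff spaces, and let `K ⊆ X` be compact. For every `y₀ ∈ Y` there exist an open
neighbourhood `V` of `y₀`, an integer `m ≥ 0`, and pairwise disjoint open sets
`U 0, …, U (m-1) ⊆ X` such that `φ ⁻¹' V ∩ K ⊆ ⋃ i, U i` and for each `i` the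
restriction `φ|_{U i} : U i → V` is a homeomorphism. -/
theorem localHomeomorph_fiber_cover {X Y : Type*} [TopologicalSpace X] [TopologicalSpace Y]
    [LocallyCompactSpace X] [T2Space X] [LocallyCompactSpace Y] [T2Space Y]
    (φ : X → Y) (hφ : IsLocalHomeomorph φ) (K : Set X) (hK : IsCompact K) (y₀ : Y) :
    ∃ (V : Set Y), IsOpen V ∧ y₀ ∈ V ∧
      ∃ (m : ℕ) (U : Fin m → Set X),
        (∀ i, IsOpen (U i)) ∧
        Pairwise (Function.onFun Disjoint U) ∧
        φ ⁻¹' V ∩ K ⊆ ⋃ i, U i ∧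
        ∀ i, ∃ e : PartialHomeomorph X Y,
          e.source = U i ∧ e.target = V ∧ ∀ x ∈ U i, e x = φ x :=
  localHomeomorph_fiber_cover_general φ hφ K hK y₀
end

section
/- Let A be a topological abelian group, let X and Y be locally compact Hausdorff spaces, let φ : X → Y be a local homeomorphism, and let f ∈ C_c(X, A). Then: (i) for every y ∈ Y the set φ⁻¹({y}) ∩ supp(f) is finite, so the fibrewise sum (φ_* f)(y) := ∑_{x ∈ φ⁻¹({y})} f(x) has only finitely many nonzero terms; (ii) φ_* f : Y → A is continuous; (iii) supp(φ_* f) ⊆ φ(supp(f)); (iv) φ_* f ∈ C_c(Y, A). (Well-definedness part of Proposition 2.1.2 and Definition 2.1.1.) -/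
/-!
The fibres of a local homeomorphism are discrete, so they meet the compact set `supp f` in
finitely many points. Near a point `y₀`, the finitely many points of `φ⁻¹{y₀} ∩ supp f` have pairwise disjoint open
neighbourhoods on which `φ` is a homeomorphism onto its image. By compactness of `supp f`,
for `y` close to `y₀` every point of `φ⁻¹{y} ∩ supp f` lies in one of these neighbourhoods, so
`φ_* f` agrees near `y₀` with the finite sum of the continuous functions `f ∘ σ`, where `σ`
runs over the corresponding local inverses of `φ`.
-/

open Set Function

/-- The pushforward of a function `f : X → A` along `φ : X → Y`, defined by summing over
the fibres: `(pushforward φ f) y = ∑_{x ∈ φ⁻¹({y})} f x` (a `finsum`, which is `0` if the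
family is not finitely supported). -/
noncomputable def pushforward {X Y A : Type*} [AddCommMonoid A] (φ : X → Y) (f : X → A) :
    Y → A :=
  fun y => ∑ᶠ x ∈ φ ⁻¹' {y}, f x

open Filter Topology

theorem finsum_mem_eq_sum_finsum_mem_inter {X ι A : Type*} [AddCommMonoid A] {f : X → A}
    {t : Set X} {s : Finset ι} {U : ι → Set X} (hdisj : (s : Set ι).PairwiseDisjoint U)
    (hfin : ∀ i ∈ s, (t ∩ U i).Finite) (hcover : t ∩ support f ⊆ ⋃ i ∈ s, U i) :
    ∑ᶠ x ∈ t, f x = ∑ i ∈ s, ∑ᶠ x ∈ t ∩ U i, f x := by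
  have hsupp : t ∩ support f = (t ∩ ⋃ i ∈ s, U i) ∩ support f := by
    ext x
    exact ⟨fun hx => ⟨⟨hx.1, hcover hx⟩, hx.2⟩, fun hx => ⟨hx.1.1, hx.2⟩⟩
  calc ∑ᶠ x ∈ t, f x = ∑ᶠ x ∈ ⋃ i ∈ (s : Set ι), t ∩ U i, f x := by
        rw [finsum_mem_inter_support_eq f _ _ hsupp, inter_iUnion₂]
        simp only [Finset.mem_coe]
    _ = ∑ᶠ i ∈ (s : Set ι), ∑ᶠ x ∈ t ∩ U i, f x :=
        finsum_mem_biUnion (hdisj.mono fun _ => inter_subset_right) s.finite_toSet hfin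
    _ = ∑ i ∈ s, ∑ᶠ x ∈ t ∩ U i, f x := finsum_mem_coe_finset _ _

theorem support_pushforward_subset {X Y A : Type*} [AddCommMonoid A] (φ : X → Y) (f : X → A) :
    support (pushforward φ f) ⊆ φ '' support f := fun _ hy =>
  let ⟨x, hx, hfx⟩ := exists_ne_zero_of_finsum_mem_ne_zero hy
  ⟨x, hfx, hx⟩

section Pushforward

variable {X Y A : Type*} [TopologicalSpace X] [TopologicalSpace Y] {φ : X → Y}

theorem tsupport_pushforward_subset [AddCommMonoid A] [T2Space Y] {f : X → A}
    (hφ : Continuous φ) (hf : HasCompactSupport f) :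
    tsupport (pushforward φ f) ⊆ φ '' tsupport f :=
  closure_minimal ((support_pushforward_subset φ f).trans (image_mono (subset_tsupport f)))
    (hf.isCompact.image hφ).isClosed

theorem HasCompactSupport.pushforward [AddCommMonoid A] [T2Space Y] {f : X → A}
    (hf : HasCompactSupport f) (hφ : Continuous φ) : HasCompactSupport (pushforward φ f) :=
  (hf.isCompact.image hφ).of_isClosed_subset (isClosed_tsupport _)
    (tsupport_pushforward_subset hφ hf)

theorem IsLocalHomeomorph.finite_preimage_singleton_inter [T1Space Y]
    (hφ : IsLocalHomeomorph φ) {K : Set X} (hK : IsCompact K) (y : Y) :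
    (φ ⁻¹' {y} ∩ K).Finite := by
  have hcompact : IsCompact (φ ⁻¹' {y} ∩ K) :=
    hK.inter_left (isClosed_singleton.preimage hφ.continuous)
  have himage : (φ '' (φ ⁻¹' {y} ∩ K)).Subsingleton :=
    subsingleton_singleton.anti (image_subset_iff.2 inter_subset_left)
  exact hcompact.finite
    ((hφ.isLocalHomeomorphOn.mono (subset_univ _)).isDiscrete_of_image himage.isDiscrete)

theorem IsLocalHomeomorph.exists_pairwiseDisjoint_source [T2Space X]
    (hφ : IsLocalHomeomorph φ) {S : Set X} (hS : S.Finite) :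
    ∃ e : X → OpenPartialHomeomorph X Y, (∀ x, x ∈ (e x).source ∧ φ = e x) ∧
      S.PairwiseDisjoint fun x => (e x).source := by
  choose e hes hφe using hφ
  obtain ⟨U, hU, hdisj⟩ := hS.t2_separation
  refine ⟨fun x => (e x).restrOpen (U x) (hU x).2, fun x => ⟨?_, hφe x⟩, ?_⟩
  · rw [OpenPartialHomeomorph.restrOpen_source]
    exact ⟨hes x, (hU x).1⟩
  · refine hdisj.mono fun x => ?_
    rw [OpenPartialHomeomorph.restrOpen_source]
    exact inter_subset_right

theorem eventually_preimage_singleton_inter_subset [T2Space Y] (hφ : Continuous φ)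
    {K O : Set X} (hK : IsCompact K) (hO : IsOpen O) {y₀ : Y} (h : φ ⁻¹' {y₀} ∩ K ⊆ O) :
    ∀ᶠ y in 𝓝 y₀, φ ⁻¹' {y} ∩ K ⊆ O := by
  have hclosed : IsClosed (φ '' (K \ O)) := ((hK.diff hO).image hφ).isClosed
  have hy₀ : y₀ ∉ φ '' (K \ O) := fun ⟨x, hx, hxy⟩ => hx.2 (h ⟨hxy, hx.1⟩)
  filter_upwards [hclosed.isOpen_compl.mem_nhds hy₀] with y hy x hx
  by_contra hxO
  exact hy ⟨x, ⟨hx.2, hxO⟩, hx.1⟩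

theorem pushforward_eventuallyEq_sum [AddCommMonoid A] [T2Space Y] {f : X → A}
    (hφ : Continuous φ) (hf : HasCompactSupport f) {ι : Type*} {s : Finset ι}
    {U : ι → Set X} (hU : ∀ i ∈ s, IsOpen (U i)) (hinj : ∀ i ∈ s, InjOn φ (U i))
    (hdisj : (s : Set ι).PairwiseDisjoint U) {y₀ : Y}
    (hcover : φ ⁻¹' {y₀} ∩ tsupport f ⊆ ⋃ i ∈ s, U i) :
    pushforward φ f =ᶠ[𝓝 y₀] fun y => ∑ i ∈ s, ∑ᶠ x ∈ φ ⁻¹' {y} ∩ U i, f x := by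
  filter_upwards [eventually_preimage_singleton_inter_subset hφ hf.isCompact
    (isOpen_biUnion hU) hcover] with y hy
  refine finsum_mem_eq_sum_finsum_mem_inter hdisj (fun i hi => ?_) ?_
  · have hsub : (φ ⁻¹' {y} ∩ U i).Subsingleton := fun a ha b hb =>
      hinj i hi ha.2 hb.2 (ha.1.trans hb.1.symm)
    exact hsub.finite
  · exact (inter_subset_inter_right _ (subset_tsupport f)).trans hy

theorem OpenPartialHomeomorph.preimage_singleton_inter_source (e : OpenPartialHomeomorph X Y)
    {y : Y} (hy : y ∈ e.target) : e ⁻¹' {y} ∩ e.source = {e.symm y} := by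
  ext x
  refine ⟨fun ⟨hxy, hx⟩ => ?_, ?_⟩
  · rw [mem_singleton_iff, ← hxy, e.left_inv hx]
  · rintro rfl
    exact ⟨e.right_inv hy, e.map_target hy⟩

theorem OpenPartialHomeomorph.continuousAt_finsum_mem_preimage_singleton_inter_source
    [AddCommMonoid A] [TopologicalSpace A] (e : OpenPartialHomeomorph X Y) {f : X → A}
    {y₀ : Y} (hy₀ : y₀ ∈ e.target) (hf : ContinuousAt f (e.symm y₀)) :
    ContinuousAt (fun y => ∑ᶠ x ∈ e ⁻¹' {y} ∩ e.source, f x) y₀ := by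
  have heq : f ∘ e.symm =ᶠ[𝓝 y₀] fun y => ∑ᶠ x ∈ e ⁻¹' {y} ∩ e.source, f x := by
    filter_upwards [e.open_target.mem_nhds hy₀] with y hy
    rw [e.preimage_singleton_inter_source hy, finsum_mem_singleton, comp_apply]
  exact (hf.comp (e.continuousAt_symm hy₀)).congr heq

theorem IsLocalHomeomorph.continuous_pushforward [T2Space X] [T2Space Y] [AddCommMonoid A]
    [TopologicalSpace A] [ContinuousAdd A] (hφ : IsLocalHomeomorph φ) {f : X → A}
    (hf : Continuous f) (hsupp : HasCompactSupport f) : Continuous (pushforward φ f) := by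
  refine continuous_iff_continuousAt.2 fun y₀ => ?_
  have hS := hφ.finite_preimage_singleton_inter hsupp.isCompact y₀
  obtain ⟨e, he, hdisj⟩ := hφ.exists_pairwiseDisjoint_source hS
  have hcover : φ ⁻¹' {y₀} ∩ tsupport f ⊆ ⋃ x ∈ hS.toFinset, (e x).source := fun x hx =>
    mem_biUnion (hS.mem_toFinset.2 hx) (he x).1
  have hlocal := pushforward_eventuallyEq_sum hφ.continuous hsupp (fun x _ => (e x).open_source)
    (fun x _ => (he x).2 ▸ (e x).injOn) (by rwa [hS.coe_toFinset]) hcover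
  refine ContinuousAt.congr ?_ hlocal.symm
  refine tendsto_finsetSum _ fun x hx => ?_
  have hy₀ : y₀ ∈ (e x).target := by
    rw [← (hS.mem_toFinset.1 hx).1, (he x).2]
    exact (e x).map_source (he x).1
  rw [(he x).2]
  exact (e x).continuousAt_finsum_mem_preimage_singleton_inter_source hy₀ hf.continuousAt

end Pushforward

theorem pushforward_wellDefined_general {X Y A : Type*} [TopologicalSpace X] [TopologicalSpace Y]
    [T2Space X] [T2Space Y]
    [AddCommGroup A] [TopologicalSpace A] [IsTopologicalAddGroup A]
    (φ : X → Y) (hφ : IsLocalHomeomorph φ) (f : X → A)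
    (hf : Continuous f) (hsupp : HasCompactSupport f) :
    (∀ y : Y, (φ ⁻¹' {y} ∩ tsupport f).Finite) ∧
    Continuous (pushforward φ f) ∧
    tsupport (pushforward φ f) ⊆ φ '' tsupport f ∧
    HasCompactSupport (pushforward φ f) :=
  ⟨hφ.finite_preimage_singleton_inter hsupp.isCompact, hφ.continuous_pushforward hf hsupp,
    tsupport_pushforward_subset hφ.continuous hsupp, hsupp.pushforward hφ.continuous⟩

/-- Well-definedness part of **Proposition 2.1.2** (and Definition 2.1.1): if `A` is a
topological abelian group, `X`, `Y` are locally compact Hausdorff, `φ : X → Y` is a local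
homeomorphism and `f : X → A` is continuous with compact support, then
(i) each fibre meets the support of `f` in a finite set;
(ii) `φ_* f` is continuous;
(iii) `supp (φ_* f) ⊆ φ '' supp f`;
(iv) `φ_* f` has compact support. -/
theorem pushforward_wellDefined {X Y A : Type*} [TopologicalSpace X] [TopologicalSpace Y]
    [LocallyCompactSpace X] [T2Space X] [LocallyCompactSpace Y] [T2Space Y]
    [AddCommGroup A] [TopologicalSpace A] [IsTopologicalAddGroup A]
    (φ : X → Y) (hφ : IsLocalHomeomorph φ) (f : X → A)
    (hf : Continuous f) (hsupp : HasCompactSupport f) :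
    (∀ y : Y, (φ ⁻¹' {y} ∩ tsupport f).Finite) ∧
    Continuous (pushforward φ f) ∧
    tsupport (pushforward φ f) ⊆ φ '' tsupport f ∧
    HasCompactSupport (pushforward φ f) :=
  pushforward_wellDefined_general φ hφ f hf hsupp
end

section
/- Let (X, d) and (X', d') be metric spaces and let π : X → X' be a continuous proper surjection. Then for every x' ∈ X' and every open set U ⊆ X' containing x' there exists ε > 0 such that every y' ∈ X' with d_H(π⁻¹({x'}), π⁻¹({y'})) < ε satisfies y' ∈ U. (This expresses the continuity of the inclusion of X' equipped with the Hausdorff-distance-of-fibres metric into (X', d'); Lemma 3.1.12.) -/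
open Set Metric

/-- **Lemma 3.1.12** (continuity of the inclusion of the Hausdorff-distance-of-fibres
metric): let `π : X → X'` be a continuous proper surjection between metric spaces. For
every `x' ∈ X'` and every open `U ⊆ X'` containing `x'` there exists `ε > 0` such that
every `y'` whose fibre is within Hausdorff distance `ε` of the fibre of `x'` lies in `U`. -/
theorem fibre_hausdorffDist_inclusion_continuous {X X' : Type*} [MetricSpace X]
    [MetricSpace X'] (π : X → X') (hcont : Continuous π)
    (hproper : ∀ K : Set X', IsCompact K → IsCompact (π ⁻¹' K))
    (hsurj : Function.Surjective π) :
    ∀ x' : X', ∀ U : Set X', IsOpen U → x' ∈ U →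
      ∃ ε > 0, ∀ y' : X',
        Metric.hausdorffDist (π ⁻¹' {x'}) (π ⁻¹' {y'}) < ε → y' ∈ U := by
  intro x' U hU hxU
  have hFcomp : IsCompact (π ⁻¹' {x'}) := hproper _ isCompact_singleton
  have hFsub : π ⁻¹' {x'} ⊆ π ⁻¹' U := fun z hz => by
    simp only [mem_preimage, mem_singleton_iff] at hz
    simpa [mem_preimage, hz]
  obtain ⟨δ, hδ, hth⟩ := hFcomp.exists_thickening_subset_open (hU.preimage hcont) hFsub
  refine ⟨δ, hδ, fun y' hdist => ?_⟩
  obtain ⟨z, hz⟩ := hsurj y'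
  have hzF : z ∈ π ⁻¹' {y'} := by simp [hz]
  have hGcomp : IsCompact (π ⁻¹' {y'}) := hproper _ isCompact_singleton
  obtain ⟨x0, hx0⟩ := hsurj x'
  have hne : (π ⁻¹' {x'}).Nonempty := ⟨x0, by simp [hx0]⟩
  have hedist : EMetric.hausdorffEdist (π ⁻¹' {x'}) (π ⁻¹' {y'}) ≠ ⊤ :=
    Metric.hausdorffEdist_ne_top_of_nonempty_of_bounded hne ⟨z, hzF⟩
      hFcomp.isBounded hGcomp.isBounded
  obtain ⟨w, hwF, hw⟩ := Metric.exists_dist_lt_of_hausdorffDist_lt' hzF hdist hedist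
  have : z ∈ Metric.thickening δ (π ⁻¹' {x'}) :=
    Metric.mem_thickening_iff.2 ⟨w, hwF, by simpa [dist_comm] using hw⟩
  have := hth this
  simpa [hz] using this
end

section
/- Let (X, d) and (X', d') be locally compact metric spaces and let π : X → X' be a continuous proper surjection which is regular. Let K ⊆ X' be compact and δ > 0, and set K_δ := {x' ∈ K : diam(π⁻¹({x'})) ≥ δ}. Then every sequence (x'_k) in K_δ admits a subsequence (x'_{k_j}) and a point x' ∈ K_δ such that x'_{k_j} → x' in (X', d') and d_H(π⁻¹({x'_{k_j}}), π⁻¹({x'})) → 0 as j → ∞. (This expresses compactness of K_δ in the Hausdorff-distance-of-fibres metric; Lemma 3.1.13.) -/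
open Set Metric Filter Topology

/-- **Lemma 3.1.13** (compactness of `K_δ` in the Hausdorff-distance-of-fibres metric):
let `π : X → X'` be a continuous regular proper surjection between locally compact metric
spaces, `K ⊆ X'` compact, `δ > 0`, and `K_δ = {x' ∈ K : diam (π⁻¹{x'}) ≥ δ}`. Then every
sequence in `K_δ` admits a subsequence converging in `(X', d')` to a point of `K_δ`, with
the Hausdorff distances of the corresponding fibres tending to `0`. -/
theorem Kdelta_sequentially_compact {X X' : Type*} [MetricSpace X] [MetricSpace X']
    [LocallyCompactSpace X] [LocallyCompactSpace X']
    (π : X → X') (hcont : Continuous π)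
    (hproper : ∀ K : Set X', IsCompact K → IsCompact (π ⁻¹' K))
    (hsurj : Function.Surjective π)
    (hreg : ∀ x' : X', ∀ ε > (0 : ℝ), ∃ U' : Set X', IsOpen U' ∧ x' ∈ U' ∧
      ∀ y' ∈ U', Metric.hausdorffDist (π ⁻¹' {x'}) (π ⁻¹' {y'}) < ε ∨
        Metric.diam (π ⁻¹' {y'}) < ε)
    (K : Set X') (hK : IsCompact K) (δ : ℝ) (hδ : 0 < δ)
    (x' : ℕ → X') (hx' : ∀ k, x' k ∈ {z ∈ K | δ ≤ Metric.diam (π ⁻¹' {z})}) :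
    ∃ (φ : ℕ → ℕ), StrictMono φ ∧
      ∃ l ∈ {z ∈ K | δ ≤ Metric.diam (π ⁻¹' {z})},
        Filter.Tendsto (x' ∘ φ) Filter.atTop (nhds l) ∧
        Filter.Tendsto (fun j => Metric.hausdorffDist (π ⁻¹' {x' (φ j)}) (π ⁻¹' {l}))
          Filter.atTop (nhds 0) := by
  have hfc : ∀ z : X', IsCompact (π ⁻¹' {z}) := fun z => hproper _ isCompact_singleton
  have hfn : ∀ z : X', (π ⁻¹' {z}).Nonempty := by
    intro z; obtain ⟨x, hx⟩ := hsurj z; exact ⟨x, hx⟩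
  obtain ⟨l, hlK, φ, hφ, hconv⟩ := hK.tendsto_subseq (fun k => (hx' k).1)
  -- key: Hausdorff distances of fibres eventually small
  have key : ∀ ε > (0 : ℝ), ∀ᶠ j in atTop,
      hausdorffDist (π ⁻¹' {x' (φ j)}) (π ⁻¹' {l}) < ε := by
    intro ε hε
    obtain ⟨U, hUo, hlU, hU⟩ := hreg l (min ε δ) (lt_min hε hδ)
    have hmem : ∀ᶠ j in atTop, x' (φ j) ∈ U :=
      hconv.eventually (hUo.eventually_mem hlU)
    filter_upwards [hmem] with j hj
    rcases hU _ hj with h | h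
    · rw [hausdorffDist_comm] at h
      exact lt_of_lt_of_le h (min_le_left _ _)
    · exact absurd ((hx' (φ j)).2.trans_lt (h.trans_le (min_le_right _ _)))
        (lt_irrefl δ)
  have htend : Tendsto (fun j => hausdorffDist (π ⁻¹' {x' (φ j)}) (π ⁻¹' {l}))
      atTop (nhds 0) := by
    rw [Metric.tendsto_atTop]
    intro ε hε
    obtain ⟨N, hN⟩ := (key ε hε).exists_forall_of_atTop
    exact ⟨N, fun n hn => by
      rw [Real.dist_eq, sub_zero, abs_of_nonneg hausdorffDist_nonneg]
      exact hN n hn⟩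
  -- the fibre over `l` also has diameter at least `δ`
  have hdl : δ ≤ diam (π ⁻¹' {l}) := by
    refine le_of_forall_pos_le_add ?_
    intro ε hε
    obtain ⟨j, hj⟩ := (key (ε / 2) (half_pos hε)).exists
    have hne : EMetric.hausdorffEdist (π ⁻¹' {x' (φ j)}) (π ⁻¹' {l}) ≠ ⊤ :=
      hausdorffEdist_ne_top_of_nonempty_of_bounded (hfn _) (hfn _)
        (hfc _).isBounded (hfc _).isBounded
    have hdiamle : diam (π ⁻¹' {x' (φ j)}) ≤ diam (π ⁻¹' {l}) + ε := by
      refine diam_le_of_forall_dist_le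
        (by positivity) ?_
      intro a ha b hb
      obtain ⟨a', ha', haa'⟩ := exists_dist_lt_of_hausdorffDist_lt ha hj hne
      obtain ⟨b', hb', hbb'⟩ := exists_dist_lt_of_hausdorffDist_lt hb hj hne
      calc dist a b ≤ dist a a' + dist a' b' + dist b' b := dist_triangle4 a a' b' b
        _ ≤ ε / 2 + diam (π ⁻¹' {l}) + ε / 2 := by
            refine add_le_add (add_le_add haa'.le
              (dist_le_diam_of_mem (hfc _).isBounded ha' hb')) ?_
            rw [dist_comm]; exact hbb'.le
        _ = diam (π ⁻¹' {l}) + ε := by ring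
    exact (hx' (φ j)).2.trans hdiamle
  exact ⟨φ, hφ, l, ⟨hlK, hdl⟩, hconv, htend⟩
end

section
/- For i = 1, 2 let (X_i, d_i) and (X'_i, d'_i) be locally compact metric spaces and let π_i : X_i → X'_i be a continuous proper surjection. Let φ : X₁ → X₂ and φ' : X'₁ → X'₂ be surjective local homeomorphisms such that π₂ ∘ φ = φ' ∘ π₁, and assume that for every x' ∈ X'₁ the restriction of φ to the fibre π₁⁻¹({x'}) is a bijection onto π₂⁻¹({φ'(x')}). Then π₁ is regular if and only if π₂ is regular. (Proposition 3.1.15.) -/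
open Set Metric

/-- A continuous proper surjection `π : X → X'` between metric spaces is *regular* if for
every `x' ∈ X'` and every `ε > 0` there is an open neighbourhood `U'` of `x'` such that
every `y' ∈ U'` satisfies `d_H(π⁻¹{x'}, π⁻¹{y'}) < ε` or `diam (π⁻¹{y'}) < ε`. -/
def IsRegularMap {X X' : Type*} [MetricSpace X] [MetricSpace X'] (π : X → X') : Prop :=
  ∀ x' : X', ∀ ε > (0 : ℝ), ∃ U' : Set X', IsOpen U' ∧ x' ∈ U' ∧
    ∀ y' ∈ U', Metric.hausdorffDist (π ⁻¹' {x'}) (π ⁻¹' {y'}) < ε ∨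
      Metric.diam (π ⁻¹' {y'}) < ε

theorem regular_forward_aux {X₁ X₂ X₁' X₂' : Type*}
    [MetricSpace X₁] [MetricSpace X₂] [MetricSpace X₁'] [MetricSpace X₂']
    [LocallyCompactSpace X₁']
    (π₁ : X₁ → X₁') (π₂ : X₂ → X₂')
    (hproper₁ : ∀ K : Set X₁', IsCompact K → IsCompact (π₁ ⁻¹' K))
    (hsurj₁ : Function.Surjective π₁)
    (φ : X₁ → X₂) (φ' : X₁' → X₂')
    (hφc : Continuous φ) (hφ' : IsLocalHomeomorph φ')
    (hφ'surj : Function.Surjective φ')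
    (hcomm : π₂ ∘ φ = φ' ∘ π₁)
    (hfib : ∀ x' : X₁', Set.BijOn φ (π₁ ⁻¹' {x'}) (π₂ ⁻¹' {φ' x'}))
    (hreg : IsRegularMap π₁) : IsRegularMap π₂ := by
  have hc : ∀ a, π₂ (φ a) = φ' (π₁ a) := fun a => congrFun hcomm a
  intro x₂' ε hε
  obtain ⟨x₁', rfl⟩ := hφ'surj x₂'
  obtain ⟨e', hx₁'e, hfe'⟩ := hφ' x₁'
  -- a compact closed ball around x₁'
  obtain ⟨K, hKc, hKn⟩ := exists_compact_mem_nhds x₁'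
  obtain ⟨r₀, hr₀, hball⟩ := Metric.nhds_basis_closedBall.mem_iff.mp hKn
  have hK₁c : IsCompact (π₁ ⁻¹' Metric.closedBall x₁' r₀) :=
    hproper₁ _ (hKc.of_isClosed_subset Metric.isClosed_closedBall hball)
  set K₁ := π₁ ⁻¹' Metric.closedBall x₁' r₀ with hK₁def
  -- uniform continuity of φ on K₁
  obtain ⟨δ₁, hδ₁, hδ⟩ := Metric.uniformContinuousOn_iff.mp
    (hK₁c.uniformContinuousOn_of_continuous hφc.continuousOn) (ε/2) (by linarith)
  -- regularity of π₁ at x₁'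
  obtain ⟨U₁', hU₁open, hx₁U, hU₁⟩ := hreg x₁' δ₁ hδ₁
  refine ⟨↑e' '' (U₁' ∩ Metric.ball x₁' r₀ ∩ e'.source), ?_, ?_, ?_⟩
  · exact e'.isOpen_image_of_subset_source
      ((hU₁open.inter Metric.isOpen_ball).inter e'.open_source) inter_subset_right
  · exact ⟨x₁', ⟨⟨hx₁U, Metric.mem_ball_self hr₀⟩, hx₁'e⟩, (congrFun hfe' x₁').symm⟩
  · rintro y₂' ⟨y₁', ⟨⟨hyU, hyball⟩, hyse⟩, rfl⟩
    rw [show (e' : X₁' → X₂') y₁' = φ' y₁' from (congrFun hfe' y₁').symm]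
    set F₁ := π₁ ⁻¹' {x₁'} with hF₁def
    set G₁ := π₁ ⁻¹' {y₁'} with hG₁def
    have hF₁K : F₁ ⊆ K₁ := fun a ha => by
      have ha' : π₁ a = x₁' := ha
      show π₁ a ∈ Metric.closedBall x₁' r₀
      rw [ha']; exact Metric.mem_closedBall_self hr₀.le
    have hG₁K : G₁ ⊆ K₁ := fun a ha => by
      have ha' : π₁ a = y₁' := ha
      show π₁ a ∈ Metric.closedBall x₁' r₀
      rw [ha']; exact Metric.ball_subset_closedBall hyball
    have hF₁n : F₁.Nonempty := hsurj₁ x₁'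
    have hG₁n : G₁.Nonempty := hsurj₁ y₁'
    have hF₁b : Bornology.IsBounded F₁ := hK₁c.isBounded.subset hF₁K
    have hG₁b : Bornology.IsBounded G₁ := hK₁c.isBounded.subset hG₁K
    have memG₂ : ∀ g ∈ G₁, φ g ∈ π₂ ⁻¹' {φ' y₁'} := fun g hg => by
      simp only [mem_preimage, mem_singleton_iff] at *
      rw [hc g, hg]
    have memF₂ : ∀ f ∈ F₁, φ f ∈ π₂ ⁻¹' {φ' x₁'} := fun f hf => by
      simp only [mem_preimage, mem_singleton_iff] at *
      rw [hc f, hf]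
    rcases hU₁ y₁' hyU with hcase | hcase
    · -- Hausdorff distance case
      left
      have fin : EMetric.hausdorffEdist F₁ G₁ ≠ ⊤ :=
        Metric.hausdorffEdist_ne_top_of_nonempty_of_bounded hF₁n hG₁n hF₁b hG₁b
      have hle : Metric.hausdorffDist (π₂ ⁻¹' {φ' x₁'}) (π₂ ⁻¹' {φ' y₁'}) ≤ ε/2 := by
        apply Metric.hausdorffDist_le_of_mem_dist (by linarith)
        · intro p hp
          obtain ⟨f, hf, rfl⟩ := (hfib x₁').surjOn hp
          obtain ⟨g, hg, hfg⟩ := Metric.exists_dist_lt_of_hausdorffDist_lt hf hcase fin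
          exact ⟨φ g, memG₂ g hg, (hδ f (hF₁K hf) g (hG₁K hg) hfg).le⟩
        · intro q hq
          obtain ⟨g, hg, rfl⟩ := (hfib y₁').surjOn hq
          obtain ⟨f, hf, hfg⟩ := Metric.exists_dist_lt_of_hausdorffDist_lt' hg hcase fin
          exact ⟨φ f, memF₂ f hf, by rw [dist_comm]; exact (hδ f (hF₁K hf) g (hG₁K hg) hfg).le⟩
      linarith
    · -- diameter case
      right
      have hle : Metric.diam (π₂ ⁻¹' {φ' y₁'}) ≤ ε/2 := by
        apply Metric.diam_le_of_forall_dist_le (by linarith)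
        intro p hp q hq
        obtain ⟨g, hg, rfl⟩ := (hfib y₁').surjOn hp
        obtain ⟨h, hh, rfl⟩ := (hfib y₁').surjOn hq
        have : dist g h < δ₁ := lt_of_le_of_lt (Metric.dist_le_diam_of_mem hG₁b hg hh) hcase
        exact (hδ g (hG₁K hg) h (hG₁K hh) this).le
      linarith

theorem regular_backward_aux {X₁ X₂ X₁' X₂' : Type*}
    [MetricSpace X₁] [MetricSpace X₂] [MetricSpace X₁'] [MetricSpace X₂']
    [LocallyCompactSpace X₁']
    (π₁ : X₁ → X₁') (π₂ : X₂ → X₂')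
    (hcont₁ : Continuous π₁)
    (hproper₁ : ∀ K : Set X₁', IsCompact K → IsCompact (π₁ ⁻¹' K))
    (hproper₂ : ∀ K : Set X₂', IsCompact K → IsCompact (π₂ ⁻¹' K))
    (hsurj₁ : Function.Surjective π₁)
    (φ : X₁ → X₂) (φ' : X₁' → X₂')
    (hφ : IsLocalHomeomorph φ) (hφ' : IsLocalHomeomorph φ')
    (hcomm : π₂ ∘ φ = φ' ∘ π₁)
    (hfib : ∀ x' : X₁', Set.BijOn φ (π₁ ⁻¹' {x'}) (π₂ ⁻¹' {φ' x'}))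
    (hreg : IsRegularMap π₂) : IsRegularMap π₁ := by
  have hφc : Continuous φ := hφ.continuous
  have hφ'c : Continuous φ' := hφ'.continuous
  have hc : ∀ a, π₂ (φ a) = φ' (π₁ a) := fun a => congrFun hcomm a
  intro x' ε hε
  obtain ⟨e', hx'e', hfe'⟩ := hφ' x'
  -- fibres over x'
  set F₁ := π₁ ⁻¹' {x'} with hF₁def
  have hF₁n : F₁.Nonempty := hsurj₁ x'
  -- membership facts
  have memfib : ∀ (y' : X₁') (g : X₁), π₁ g = y' → φ g ∈ π₂ ⁻¹' {φ' y'} := by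
    intro y' g hg
    simp only [mem_preimage, mem_singleton_iff]
    rw [hc g, hg]
  -- a compact closed ball around x'
  obtain ⟨K, hKc, hKn⟩ := exists_compact_mem_nhds x'
  obtain ⟨r₀, hr₀, hballK⟩ := Metric.nhds_basis_closedBall.mem_iff.mp hKn
  have hK₁c : IsCompact (π₁ ⁻¹' Metric.closedBall x' r₀) :=
    hproper₁ _ (hKc.of_isClosed_subset Metric.isClosed_closedBall hballK)
  set K₁ := π₁ ⁻¹' Metric.closedBall x' r₀ with hK₁def
  have hF₁K : F₁ ⊆ K₁ := fun a ha => by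
    have ha' : π₁ a = x' := ha
    show π₁ a ∈ Metric.closedBall x' r₀
    rw [ha']; exact Metric.mem_closedBall_self hr₀.le
  -- Step A: local data around each point of the fibre F₁
  have stepA : ∀ f : X₁, ∃ (U : Set X₁) (r s : ℝ), 0 < r ∧ 0 < s ∧
      (f ∈ F₁ → (U ⊆ Metric.ball f (ε/4) ∧ (∀ u ∈ U, π₁ u ∈ e'.source) ∧
        Set.InjOn φ U ∧ Metric.ball (φ f) r ⊆ φ '' U ∧ Metric.ball f s ⊆ U ∧
        φ '' Metric.ball f s ⊆ Metric.ball (φ f) (r/2))) := by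
    intro f
    by_cases hf : f ∈ F₁
    · obtain ⟨e, hfe, hphie⟩ := hφ f
      set U : Set X₁ := e.source ∩ Metric.ball f (ε/4) ∩ π₁ ⁻¹' e'.source with hUdef
      have hUopen : IsOpen U :=
        ((e.open_source.inter Metric.isOpen_ball).inter (e'.open_source.preimage hcont₁))
      have hfU : f ∈ U := by
        refine ⟨⟨hfe, Metric.mem_ball_self (by linarith)⟩, ?_⟩
        have : π₁ f = x' := hf
        show π₁ f ∈ e'.source
        rw [this]; exact hx'e'
      have hUsub : U ⊆ e.source := fun u hu => hu.1.1
      have himgopen : IsOpen (φ '' U) := by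
        rw [hphie]; exact e.isOpen_image_of_subset_source hUopen hUsub
      obtain ⟨r, hr, hrball⟩ := Metric.isOpen_iff.mp himgopen (φ f) ⟨f, hfU, rfl⟩
      have hV : IsOpen (U ∩ φ ⁻¹' Metric.ball (φ f) (r/2)) :=
        hUopen.inter (Metric.isOpen_ball.preimage hφc)
      obtain ⟨s, hs, hsball⟩ := Metric.isOpen_iff.mp hV f
        ⟨hfU, Metric.mem_ball_self (by linarith)⟩
      refine ⟨U, r, s, hr, hs, fun _ => ⟨fun u hu => hu.1.2, fun u hu => hu.2, ?_, hrball, ?_, ?_⟩⟩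
      · intro a ha b hb hab
        apply e.injOn (hUsub ha) (hUsub hb)
        rw [← hphie, ← hphie] at *
        exact hab
      · exact fun u hu => (hsball hu).1
      · rintro q ⟨u, hu, rfl⟩
        exact (hsball hu).2
    · exact ⟨∅, 1, 1, one_pos, one_pos, fun h => absurd h hf⟩
  choose U r s hr hs hprop using stepA
  -- Step B: finite subcover of F₁ by the balls `ball f (s f)`
  have hcover : F₁ ⊆ ⋃ f ∈ F₁, Metric.ball f (s f) := fun f hf =>
    mem_biUnion hf (Metric.mem_ball_self (hs f))
  obtain ⟨T, hTsub, hTfin, hTcover⟩ := (hproper₁ _ isCompact_singleton :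
      IsCompact F₁).elim_finite_subcover_image (fun f _ => Metric.isOpen_ball) hcover
  have hTne : T.Nonempty := by
    obtain ⟨f, hf⟩ := hF₁n
    obtain ⟨t, ht, _⟩ := mem_iUnion₂.mp (hTcover hf)
    exact ⟨t, ht⟩
  -- δ : a Lebesgue-type number
  set Tf := hTfin.toFinset with hTfdef
  have hTfne : Tf.Nonempty := by
    rwa [hTfdef, Set.Finite.toFinset_nonempty]
  set δ := (Tf.inf' hTfne r) / 2 with hδdef
  have hδpos : 0 < δ := by
    have : ∀ t ∈ Tf, 0 < r t := fun t _ => hr t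
    have h2 : 0 < Tf.inf' hTfne r := (Finset.lt_inf'_iff hTfne).mpr this
    positivity
  have hδle : ∀ t ∈ T, δ ≤ r t / 2 := by
    intro t ht
    have : Tf.inf' hTfne r ≤ r t := Finset.inf'_le r (hTfin.mem_toFinset.mpr ht)
    rw [hδdef]; linarith
  -- Claim K
  have claimK : ∀ f ∈ F₁, ∀ q : X₂, dist (φ f) q < δ →
      ∃ t ∈ T, f ∈ U t ∧ q ∈ φ '' U t := by
    intro f hf q hq
    obtain ⟨t, ht, hft⟩ := mem_iUnion₂.mp (hTcover hf)
    obtain ⟨hUball, hUsrc, hUinj, hrball, hsball, himg⟩ := hprop t (hTsub ht)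
    have hfU : f ∈ U t := hsball hft
    have h1 : dist (φ f) (φ t) < r t / 2 := himg ⟨f, hft, rfl⟩
    have h2 : dist q (φ t) < r t := by
      have := hδle t ht
      calc dist q (φ t) ≤ dist q (φ f) + dist (φ f) (φ t) := dist_triangle _ _ _
        _ < δ + r t / 2 := by rw [dist_comm q (φ f)]; exact add_lt_add hq h1
        _ ≤ r t := by linarith
    exact ⟨t, ht, hfU, hrball h2⟩
  -- Claim L
  have claimL : ∀ t ∈ T, ∀ y' ∈ e'.source, ∀ g : X₁, π₁ g = y' →
      φ g ∈ φ '' U t → g ∈ U t := by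
    intro t ht y' hy' g hg hφg
    obtain ⟨hUball, hUsrc, hUinj, _, _, _⟩ := hprop t (hTsub ht)
    obtain ⟨u, hu, huv⟩ := hφg
    have hπu : π₁ u ∈ e'.source := hUsrc u hu
    have : φ' (π₁ u) = φ' y' := by
      rw [← hc u, huv, hc g, hg]
    have hπuy : π₁ u = y' := by
      apply e'.injOn hπu hy'
      rw [← congrFun hfe' (π₁ u), ← congrFun hfe' y']
      exact this
    have hufib : u ∈ π₁ ⁻¹' {y'} := hπuy
    have hgfib : g ∈ π₁ ⁻¹' {y'} := hg
    have := (hfib y').injOn hufib hgfib huv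
    rwa [← this]
  -- constant m for the diameter case
  have hCm : ∃ m > (0:ℝ), ∀ p : X₁ × X₁, p ∈ (K₁ ×ˢ K₁) ∩
      ({p : X₁ × X₁ | ε/2 ≤ dist p.1 p.2} ∩ {p : X₁ × X₁ | π₁ p.1 = π₁ p.2}) →
      m ≤ dist (φ p.1) (φ p.2) + dist (π₁ p.1) x' := by
    set C := (K₁ ×ˢ K₁) ∩
      ({p : X₁ × X₁ | ε/2 ≤ dist p.1 p.2} ∩ {p : X₁ × X₁ | π₁ p.1 = π₁ p.2}) with hCdef
    have hCc : IsCompact C := by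
      apply (hK₁c.prod hK₁c).inter_right
      apply IsClosed.inter
      · exact isClosed_le continuous_const (continuous_dist.comp
          (continuous_fst.prodMk continuous_snd))
      · exact isClosed_eq (hcont₁.comp continuous_fst) (hcont₁.comp continuous_snd)
    rcases C.eq_empty_or_nonempty with hCe | hCne
    · exact ⟨1, one_pos, fun p hp => absurd hp (by rw [hCe]; exact notMem_empty p)⟩
    · have hfc : Continuous fun p : X₁ × X₁ => dist (φ p.1) (φ p.2) + dist (π₁ p.1) x' := by
        apply Continuous.add
        · exact continuous_dist.comp ((hφc.comp continuous_fst).prodMk (hφc.comp continuous_snd))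
        · exact continuous_dist.comp ((hcont₁.comp continuous_fst).prodMk continuous_const)
      obtain ⟨p₀, hp₀C, hmin'⟩ := hCc.exists_isMinOn hCne hfc.continuousOn
      have hmin : ∀ p ∈ C, _ ≤ dist (φ p.1) (φ p.2) + dist (π₁ p.1) x' := fun p hp => hmin' hp
      refine ⟨_, ?_, hmin⟩
      by_contra hm
      push_neg at hm
      have h1 : dist (φ p₀.1) (φ p₀.2) = 0 ∧ dist (π₁ p₀.1) x' = 0 := by
        constructor <;> nlinarith [dist_nonneg (x := φ p₀.1) (y := φ p₀.2),
          dist_nonneg (x := π₁ p₀.1) (y := x')]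
      have hπ1 : π₁ p₀.1 = x' := by
        have := h1.2; rwa [dist_eq_zero] at this
      have hπ2 : π₁ p₀.2 = x' := by
        rw [← hp₀C.2.2]; exact hπ1
      have hφeq : φ p₀.1 = φ p₀.2 := by
        have := h1.1; rwa [dist_eq_zero] at this
      have : p₀.1 = p₀.2 := (hfib x').injOn hπ1 hπ2 hφeq
      have hd : ε/2 ≤ dist p₀.1 p₀.2 := hp₀C.2.1
      rw [this, dist_self] at hd
      linarith
  obtain ⟨m, hm, hmle⟩ := hCm
  -- apply regularity of π₂ at φ' x'
  have hε₂ : (0:ℝ) < min δ (m/2) := lt_min hδpos (by linarith)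
  obtain ⟨U₂', hU₂open, hxU₂, hU₂⟩ := hreg (φ' x') (min δ (m/2)) hε₂
  refine ⟨e'.source ∩ Metric.ball x' (min r₀ (m/2)) ∩ φ' ⁻¹' U₂', ?_, ?_, ?_⟩
  · exact (e'.open_source.inter Metric.isOpen_ball).inter (hU₂open.preimage hφ'c)
  · exact ⟨⟨hx'e', Metric.mem_ball_self (lt_min hr₀ (by linarith))⟩, hxU₂⟩
  rintro y' ⟨⟨hy'e, hy'ball⟩, hy'U₂⟩
  set G₁ := π₁ ⁻¹' {y'} with hG₁def
  set F₂ := π₂ ⁻¹' {φ' x'} with hF₂def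
  set G₂ := π₂ ⁻¹' {φ' y'} with hG₂def
  have hG₁K : G₁ ⊆ K₁ := fun a ha => by
    have ha' : π₁ a = y' := ha
    show π₁ a ∈ Metric.closedBall x' r₀
    rw [ha']
    exact Metric.mem_closedBall.mpr
      (le_trans (Metric.mem_ball.mp hy'ball).le (min_le_left _ _))
  have hG₁n : G₁.Nonempty := hsurj₁ y'
  have hF₂c : IsCompact F₂ := hproper₂ _ isCompact_singleton
  have hG₂c : IsCompact G₂ := hproper₂ _ isCompact_singleton
  have hF₂n : F₂.Nonempty := by
    obtain ⟨f, hf⟩ := hF₁n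
    exact ⟨φ f, memfib x' f hf⟩
  have hG₂n : G₂.Nonempty := by
    obtain ⟨g, hg⟩ := hG₁n
    exact ⟨φ g, memfib y' g hg⟩
  rcases hU₂ (φ' y') hy'U₂ with hcase | hcase
  · -- Hausdorff case
    left
    have hcase' : Metric.hausdorffDist F₂ G₂ < δ :=
      lt_of_lt_of_le hcase (min_le_left _ _)
    have fin : EMetric.hausdorffEdist F₂ G₂ ≠ ⊤ :=
      Metric.hausdorffEdist_ne_top_of_nonempty_of_bounded hF₂n hG₂n
        hF₂c.isBounded hG₂c.isBounded
    have key : ∀ f ∈ F₁, ∀ g ∈ G₁, ∀ t ∈ T, f ∈ U t → φ g ∈ φ '' U t →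
        dist f g ≤ ε/2 := by
      intro f hf g hg t ht hfU hφg
      have hgU : g ∈ U t := claimL t ht y' hy'e g hg hφg
      obtain ⟨hUball, _, _, _, _, _⟩ := hprop t (hTsub ht)
      have h1 : dist f t < ε/4 := hUball hfU
      have h2 : dist g t < ε/4 := hUball hgU
      calc dist f g ≤ dist f t + dist t g := dist_triangle _ _ _
        _ ≤ ε/2 := by rw [dist_comm t g]; linarith
    have hle : Metric.hausdorffDist F₁ G₁ ≤ ε/2 := by
      apply Metric.hausdorffDist_le_of_mem_dist (by linarith)
      · intro f hf
        obtain ⟨q, hq, hdq⟩ := Metric.exists_dist_lt_of_hausdorffDist_lt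
          (memfib x' f hf) hcase' fin
        obtain ⟨t, ht, hfU, hqU⟩ := claimK f hf q hdq
        obtain ⟨g, hg, rfl⟩ := (hfib y').surjOn hq
        exact ⟨g, hg, key f hf g hg t ht hfU hqU⟩
      · intro g hg
        obtain ⟨p, hp, hdp⟩ := Metric.exists_dist_lt_of_hausdorffDist_lt'
          (memfib y' g hg) hcase' fin
        obtain ⟨f, hf, rfl⟩ := (hfib x').surjOn hp
        obtain ⟨t, ht, hfU, hqU⟩ := claimK f hf (φ g) hdp
        exact ⟨f, hf, by rw [dist_comm]; exact key f hf g hg t ht hfU hqU⟩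
    linarith
  · -- diameter case
    right
    have hcase' : Metric.diam G₂ < m/2 :=
      lt_of_lt_of_le hcase (min_le_right _ _)
    have hle : Metric.diam G₁ ≤ ε/2 := by
      apply Metric.diam_le_of_forall_dist_le (by linarith)
      intro g hg h hh
      by_contra hcon
      push_neg at hcon
      have hp : (g, h) ∈ (K₁ ×ˢ K₁) ∩
          ({p : X₁ × X₁ | ε/2 ≤ dist p.1 p.2} ∩ {p : X₁ × X₁ | π₁ p.1 = π₁ p.2}) := by
        refine ⟨⟨hG₁K hg, hG₁K hh⟩, hcon.le, ?_⟩
        show π₁ g = π₁ h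
        have h1 : π₁ g = y' := hg
        have h2 : π₁ h = y' := hh
        rw [h1, h2]
      have := hmle (g, h) hp
      have hd1 : dist (φ g) (φ h) ≤ Metric.diam G₂ :=
        Metric.dist_le_diam_of_mem hG₂c.isBounded (memfib y' g hg) (memfib y' h hh)
      have hd2 : dist (π₁ g) x' < m/2 := by
        have h1 : π₁ g = y' := hg
        rw [h1]
        exact lt_of_lt_of_le hy'ball (min_le_right _ _)
      simp only at this
      linarith
    linarith

/-- **Proposition 3.1.15.** For `i = 1, 2` let `π_i : X_i → X'_i` be continuous proper
surjections between locally compact metric spaces, and let `φ : X₁ → X₂`, `φ' : X'₁ → X'₂`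
be surjective local homeomorphisms with `π₂ ∘ φ = φ' ∘ π₁` such that `φ` restricts to a
bijection from each fibre `π₁⁻¹{x'}` onto `π₂⁻¹{φ' x'}`. Then `π₁` is regular if and only
if `π₂` is regular. -/
theorem regular_iff_of_fibrewise_bijective {X₁ X₂ X₁' X₂' : Type*}
    [MetricSpace X₁] [MetricSpace X₂] [MetricSpace X₁'] [MetricSpace X₂']
    [LocallyCompactSpace X₁] [LocallyCompactSpace X₂]
    [LocallyCompactSpace X₁'] [LocallyCompactSpace X₂']
    (π₁ : X₁ → X₁') (π₂ : X₂ → X₂')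
    (hcont₁ : Continuous π₁) (hcont₂ : Continuous π₂)
    (hproper₁ : ∀ K : Set X₁', IsCompact K → IsCompact (π₁ ⁻¹' K))
    (hproper₂ : ∀ K : Set X₂', IsCompact K → IsCompact (π₂ ⁻¹' K))
    (hsurj₁ : Function.Surjective π₁) (hsurj₂ : Function.Surjective π₂)
    (φ : X₁ → X₂) (φ' : X₁' → X₂')
    (hφ : IsLocalHomeomorph φ) (hφ' : IsLocalHomeomorph φ')
    (hφsurj : Function.Surjective φ) (hφ'surj : Function.Surjective φ')
    (hcomm : π₂ ∘ φ = φ' ∘ π₁)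
    (hfib : ∀ x' : X₁', Set.BijOn φ (π₁ ⁻¹' {x'}) (π₂ ⁻¹' {φ' x'})) :
    IsRegularMap π₁ ↔ IsRegularMap π₂ :=
  ⟨regular_forward_aux π₁ π₂ hproper₁ hsurj₁ φ φ' hφ.continuous hφ' hφ'surj hcomm hfib,
   regular_backward_aux π₁ π₂ hcont₁ hproper₁ hproper₂ hsurj₁ φ φ' hφ hφ' hcomm hfib⟩
end

section
/- Let X and X' be topological spaces with X' Hausdorff, let π : X → X' be a continuous, open surjection, let A be a topological abelian group, and let f ∈ C_c(X, A) be constant on every fibre of π, i.e. f(x) = f(y) whenever π(x) = π(y). Then there exists a unique function f̄ : X' → A with f = f̄ ∘ π; this f̄ is continuous, satisfies supp(f̄) ⊆ π(supp(f)), and f̄ ∈ C_c(X', A). (This is the kernel computation in Proposition 3.1.21: a compactly supported function that is constant on fibres of π descends to a compactly supported function on the base.) -/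
open Set Function

section Descent

variable {X Y A : Type*} [Zero A]

theorem Function.Surjective.image_support_comp {π : X → Y} (hπ : Surjective π) (g : Y → A) :
    π '' support (g ∘ π) = support g := by
  rw [support_comp_eq_preimage, image_preimage_eq _ hπ]

variable [TopologicalSpace X] [TopologicalSpace Y] [T2Space Y]

/-- The image of `tsupport (g ∘ π)` is compact, hence closed in the Hausdorff space `Y`, and it
contains `support g`. -/
theorem tsupport_subset_image_tsupport_comp {π : X → Y} (hcont : Continuous π)
    (hsurj : Surjective π) {g : Y → A} (hg : HasCompactSupport (g ∘ π)) :
    tsupport g ⊆ π '' tsupport (g ∘ π) :=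
  closure_minimal (hsurj.image_support_comp g ▸ image_mono (subset_tsupport _))
    (hg.image hcont).isClosed

theorem HasCompactSupport.of_comp_surjective {π : X → Y} (hcont : Continuous π)
    (hsurj : Surjective π) {g : Y → A} (hg : HasCompactSupport (g ∘ π)) :
    HasCompactSupport g :=
  (hg.image hcont).of_isClosed_subset (isClosed_tsupport g)
    (tsupport_subset_image_tsupport_comp hcont hsurj hg)

end Descent

theorem descend_compactlySupported_general {X X' A : Type*} [TopologicalSpace X]
    [TopologicalSpace X'] [T2Space X']
    [AddCommGroup A] [TopologicalSpace A]
    (π : X → X') (hcont : Continuous π) (hopen : IsOpenMap π)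
    (hsurj : Function.Surjective π)
    (f : X → A) (hf : Continuous f) (hfc : HasCompactSupport f)
    (hconst : ∀ x y : X, π x = π y → f x = f y) :
    ∃ fbar : X' → A,
      f = fbar ∘ π ∧
      Continuous fbar ∧
      tsupport fbar ⊆ π '' tsupport f ∧
      HasCompactSupport fbar ∧
      ∀ g : X' → A, f = g ∘ π → g = fbar := by
  obtain ⟨fbar, rfl⟩ := (factorsThrough_iff f).1 fun x y => hconst x y
  exact ⟨fbar, rfl, (hopen.isQuotientMap hcont hsurj).continuous_iff.2 hf,
    tsupport_subset_image_tsupport_comp hcont hsurj hfc,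
    hfc.of_comp_surjective hcont hsurj, fun g hg => hsurj.injective_comp_right hg.symm⟩

/-- Kernel computation in **Proposition 3.1.21**: let `π : X → X'` be a continuous open
surjection with `X'` Hausdorff, `A` a topological abelian group, and `f ∈ C_c(X, A)`
constant on every fibre of `π`. Then there is a unique `f̄ : X' → A` with `f = f̄ ∘ π`;
this `f̄` is continuous, has support contained in `π '' supp f`, and has compact support,
i.e. `f̄ ∈ C_c(X', A)`. -/
theorem descend_compactlySupported {X X' A : Type*} [TopologicalSpace X]
    [TopologicalSpace X'] [T2Space X']
    [AddCommGroup A] [TopologicalSpace A] [IsTopologicalAddGroup A]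
    (π : X → X') (hcont : Continuous π) (hopen : IsOpenMap π)
    (hsurj : Function.Surjective π)
    (f : X → A) (hf : Continuous f) (hfc : HasCompactSupport f)
    (hconst : ∀ x y : X, π x = π y → f x = f y) :
    ∃ fbar : X' → A,
      f = fbar ∘ π ∧
      Continuous fbar ∧
      tsupport fbar ⊆ π '' tsupport f ∧
      HasCompactSupport fbar ∧
      ∀ g : X' → A, f = g ∘ π → g = fbar :=
  descend_compactlySupported_general π hcont hopen hsurj f hf hfc hconst
end

section
/- Let X be a locally compact, totally disconnected Hausdorff space with a basis of compact open sets, and let A be a topological abelian group. Then the following are equivalent for the canonical comparison map Φ_X : C_c(X, ℤ) ⊗_ℤ A → C_c(X, A): (1) every ζ ∈ C_c(X, A) is locally constant; (2) Φ_X is surjective; (3) Φ_X is an isomorphism of abelian groups. In particular, if A is discrete then Φ_X is an isomorphism. (Corollary 3.2.4.) -/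
open scoped CompactlySupported
open Set Function

variable (X A : Type*) [TopologicalSpace X]
  [AddCommGroup A] [TopologicalSpace A] [IsTopologicalAddGroup A]

/-- The bilinear map `(f, a) ↦ (x ↦ f x • a)` from `C_c(X, ℤ) × A` to `C_c(X, A)`. -/
noncomputable def ccSmulBilin :
    C_c(X, ℤ) →ₗ[ℤ] A →ₗ[ℤ] C_c(X, A) where
  toFun f :=
    { toFun := fun a =>
        { toFun := fun x => f x • a
          continuous_toFun := by
            exact (continuous_of_discreteTopology (f := fun n : ℤ => n • a)).comp f.continuous
          hasCompactSupport' := by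
            have h := f.hasCompactSupport.comp_left (g := fun n : ℤ => n • a) (zero_smul ℤ a)
            exact h
      }
      map_add' := fun a b => by
        ext x
        exact smul_add (f x) a b
      map_smul' := fun z a => by
        ext x
        exact smul_comm (f x) z a }
  map_add' f g := by
    ext a x
    exact add_smul (f x) (g x) a
  map_smul' z f := by
    ext a x
    exact mul_smul z (f x) a

/-- The canonical comparison map `Φ_X : C_c(X, ℤ) ⊗_ℤ A → C_c(X, A)`, the unique additive
map with `Φ_X (f ⊗ a) x = f x • a`. -/
noncomputable def ccComparison :
    TensorProduct ℤ C_c(X, ℤ) A →ₗ[ℤ] C_c(X, A) :=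
  TensorProduct.lift (ccSmulBilin X A)

/-!
The image of `Φ_X` consists of locally constant functions, since each `f ⊗ a` is. Conversely a
locally constant `ζ` with compact support takes finitely many values, and
`ζ = Φ_X (∑ₐ 1_{ζ = a} ⊗ a)` over its nonzero values `a`. For injectivity, write
`t = ∑ᵢ fᵢ ⊗ aᵢ` and apply the same decomposition to the locally constant map
`F = (fᵢ)ᵢ : X → ℤ^ι`: this gives `t = ∑_v 1_{F = v} ⊗ (∑ᵢ vᵢ • aᵢ)`, and each inner sum is a
value of `Φ_X t`.
-/

theorem HasCompactSupport.pi {Y ι : Type*} [TopologicalSpace Y] [Finite ι] {M : ι → Type*}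
    [∀ i, Zero (M i)] {f : ∀ i, Y → M i} (hf : ∀ i, HasCompactSupport (f i)) :
    HasCompactSupport fun x i => f i x :=
  .intro' (isCompact_iUnion hf) (isClosed_iUnion_of_finite fun i => isClosed_tsupport (f i))
    fun _ hx => funext fun i => image_eq_zero_of_notMem_tsupport fun h => hx (mem_iUnion.2 ⟨i, h⟩)

namespace IsLocallyConstant

variable {X} {B : Type*}

theorem finite_range_of_hasCompactSupport [Zero B] {f : X → B} (hf : IsLocallyConstant f)
    (hc : HasCompactSupport f) : (range f).Finite := by
  have : CompactSpace (tsupport f) := (isCompact_iff_compactSpace (s := tsupport f)).mp hc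
  have hK := (hf.comp_continuous (continuous_subtype_val (p := (· ∈ tsupport f)))).range_finite
  refine (hK.insert 0).subset ?_
  rintro _ ⟨x, rfl⟩
  by_cases hx : f x = 0
  · exact .inl hx
  · exact .inr ⟨⟨x, subset_tsupport f hx⟩, rfl⟩

variable [AddCommGroup B] {f : X → B}

open Classical in
/-- The indicator of the level set `f ⁻¹' {b}`; the cut-off at `b = 0` keeps its support
compact. -/
noncomputable def levelIndicator (hf : IsLocallyConstant f) (hc : HasCompactSupport f) (b : B) :
    C_c(X, ℤ) where
  toFun x := if f x = b ∧ b ≠ 0 then 1 else 0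
  continuous_toFun := (hf.comp fun c => if c = b ∧ b ≠ 0 then (1 : ℤ) else 0).continuous
  hasCompactSupport' := hc.mono fun _ hx h0 => hx (if_neg fun h => h.2 (h.1 ▸ h0))

open Classical in
theorem levelIndicator_apply (hf : IsLocallyConstant f) (hc : HasCompactSupport f) (b : B)
    (x : X) : hf.levelIndicator hc b x = if f x = b ∧ b ≠ 0 then 1 else 0 := rfl

theorem sum_levelIndicator_smul (hf : IsLocallyConstant f) (hc : HasCompactSupport f) (x : X) :
    ∑ b ∈ (hf.finite_range_of_hasCompactSupport hc).toFinset, hf.levelIndicator hc b x • b =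
      f x := by
  rw [Finset.sum_eq_single_of_mem (f x) (by simp)]
  · by_cases hx : f x = 0 <;> simp [levelIndicator_apply, hx]
  · intro b _ hb
    simp [levelIndicator_apply, Ne.symm hb]

end IsLocallyConstant

section Comparison

variable {X A}

theorem ccComparison_sum_tmul_apply {ι : Type*} (s : Finset ι) (f : ι → C_c(X, ℤ)) (a : ι → A)
    (x : X) : ccComparison X A (∑ i ∈ s, f i ⊗ₜ[ℤ] a i) x = ∑ i ∈ s, f i x • a i := by
  simp only [map_sum, CompactlySupportedContinuousMap.sum_apply]
  rfl

theorem isLocallyConstant_ccComparison (t : TensorProduct ℤ C_c(X, ℤ) A) :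
    IsLocallyConstant (ccComparison X A t) := by
  induction t using TensorProduct.induction_on with
  | zero => simpa using IsLocallyConstant.const (0 : A)
  | tmul f a => exact ((IsLocallyConstant.iff_continuous f).2 f.continuous).comp (· • a)
  | add s u hs hu => simpa using hs.add hu

theorem exists_ccComparison_eq {ζ : C_c(X, A)} (hζ : IsLocallyConstant ζ) :
    ∃ t, ccComparison X A t = ζ := by
  let S := (hζ.finite_range_of_hasCompactSupport ζ.hasCompactSupport).toFinset
  refine ⟨∑ a ∈ S, hζ.levelIndicator ζ.hasCompactSupport a ⊗ₜ[ℤ] a, ?_⟩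
  ext x
  rw [ccComparison_sum_tmul_apply, hζ.sum_levelIndicator_smul]

theorem ccComparison_sum_tmul_eq_zero {ι : Type*} [Fintype ι] {f : ι → C_c(X, ℤ)} {a : ι → A}
    (h : ccComparison X A (∑ i, f i ⊗ₜ[ℤ] a i) = 0) : ∑ i, f i ⊗ₜ[ℤ] a i = 0 := by
  let F : X → ι → ℤ := fun x i => f i x
  have hF : IsLocallyConstant F :=
    (IsLocallyConstant.iff_continuous F).mpr (continuous_pi fun i => (f i).continuous)
  have hFc : HasCompactSupport F := .pi fun i => (f i).hasCompactSupport
  let S := (hF.finite_range_of_hasCompactSupport hFc).toFinset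
  let e := hF.levelIndicator hFc
  have hf : ∀ i, f i = ∑ v ∈ S, v i • e v := fun i => by
    ext x
    simpa [F, e, S, mul_comm] using (congrFun (hF.sum_levelIndicator_smul hFc x) i).symm
  have hS : ∀ v ∈ S, ∑ i, v i • a i = 0 := by
    intro v hv
    obtain ⟨x, rfl⟩ : ∃ x, F x = v := by simpa [S] using hv
    exact (ccComparison_sum_tmul_apply _ f a x).symm.trans (DFunLike.congr_fun h x)
  calc ∑ i, f i ⊗ₜ[ℤ] a i = ∑ i, ∑ v ∈ S, e v ⊗ₜ[ℤ] (v i • a i) := by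
        simp_rw [hf, TensorProduct.sum_tmul, TensorProduct.smul_tmul]
    _ = ∑ v ∈ S, e v ⊗ₜ[ℤ] (∑ i, v i • a i) := by
        rw [Finset.sum_comm]
        simp_rw [TensorProduct.tmul_sum]
    _ = 0 := Finset.sum_eq_zero fun v hv => by rw [hS v hv, TensorProduct.tmul_zero]

theorem ccComparison_injective : Injective (ccComparison X A) := by
  refine (injective_iff_map_eq_zero _).2 fun t ht => ?_
  obtain ⟨T, rfl⟩ := TensorProduct.exists_finset t
  rw [← Finset.sum_coe_sort] at ht ⊢
  exact ccComparison_sum_tmul_eq_zero ht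

end Comparison

theorem ccComparison_surjective_tfae_general {X A : Type*} [TopologicalSpace X]
    [AddCommGroup A] [TopologicalSpace A] [IsTopologicalAddGroup A] :
    ((∀ ζ : C_c(X, A), IsLocallyConstant (⇑ζ)) ↔
        Function.Surjective (ccComparison X A)) ∧
    (Function.Surjective (ccComparison X A) ↔
        Function.Bijective (ccComparison X A)) ∧
    (DiscreteTopology A → Function.Bijective (ccComparison X A)) := by
  have hsurj : (∀ ζ : C_c(X, A), IsLocallyConstant ζ) ↔ Surjective (ccComparison X A) :=
    ⟨fun h ζ => exists_ccComparison_eq (h ζ), fun h ζ => by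
      obtain ⟨t, rfl⟩ := h ζ
      exact isLocallyConstant_ccComparison t⟩
  refine ⟨hsurj, ⟨fun h => ⟨ccComparison_injective, h⟩, Bijective.surjective⟩, fun _ => ?_⟩
  exact ⟨ccComparison_injective,
    hsurj.1 fun ζ => (IsLocallyConstant.iff_continuous ζ).2 ζ.continuous⟩

/-- **Corollary 3.2.4.** Let `X` be a locally compact, totally disconnected Hausdorff space
with a basis of compact open sets, and `A` a topological abelian group. For the canonical
comparison map `Φ_X : C_c(X, ℤ) ⊗_ℤ A → C_c(X, A)` the following are equivalent:
(1) every `ζ ∈ C_c(X, A)` is locally constant; (2) `Φ_X` is surjective; (3) `Φ_X` is an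
isomorphism of abelian groups (i.e. bijective). In particular, if `A` is discrete then
`Φ_X` is an isomorphism. -/
theorem ccComparison_surjective_tfae {X A : Type*} [TopologicalSpace X]
    [LocallyCompactSpace X] [T2Space X] [TotallyDisconnectedSpace X]
    (hbasis : ∀ x : X, ∀ U : Set X, IsOpen U → x ∈ U →
      ∃ V : Set X, IsCompact V ∧ IsOpen V ∧ x ∈ V ∧ V ⊆ U)
    [AddCommGroup A] [TopologicalSpace A] [IsTopologicalAddGroup A] :
    ((∀ ζ : C_c(X, A), IsLocallyConstant (⇑ζ)) ↔
        Function.Surjective (ccComparison X A)) ∧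
    (Function.Surjective (ccComparison X A) ↔
        Function.Bijective (ccComparison X A)) ∧
    (DiscreteTopology A → Function.Bijective (ccComparison X A)) :=
  ccComparison_surjective_tfae_general
end

section
/- Let X be a non-discrete locally compact, totally disconnected Hausdorff space with a basis of compact open sets. Assume there exist a non-isolated point x ∈ X and a decreasing sequence (U_n)_{n≥1} of compact open neighbourhoods of x with U_{n+1} ⊆ U_n for all n and ⋂_{n≥1} U_n = {x}. Let A be a Hausdorff topological abelian group admitting a sequence (a_n)_{n≥1} in A \ {0} with a_n → 0. Then the canonical comparison map Φ_X : C_c(X, ℤ) ⊗_ℤ A → C_c(X, A) is not surjective. (Corollary 3.2.7.) -/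
/-!
Every element of the image of `Φ_X` has finite range, since each `f ∈ C_c(X, ℤ)` does. On the
other hand the function equal to `a n` on the shell `U n \ U (n + 1)` and to `0` elsewhere is
continuous (it is locally constant away from `x`, and tends to `0` at `x` because `a n → 0`), is
supported in `U 0`, and has infinite range: infinitely many shells are nonempty because `x` is
not isolated, and a sequence of nonzero terms tending to `0` takes each value only finitely often.
-/

open scoped CompactlySupported
open Set Function

variable (X A : Type*) [TopologicalSpace X]
  [AddCommGroup A] [TopologicalSpace A] [IsTopologicalAddGroup A]

open Filter Topology

theorem Nat.exists_ge_and_not_succ_of_le {p : ℕ → Prop} {N m : ℕ} (hNm : N ≤ m) (hN : p N)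
    (hm : ¬ p m) : ∃ n, N ≤ n ∧ p n ∧ ¬ p (n + 1) := by
  induction m, hNm using Nat.le_induction with
  | base => exact absurd hN hm
  | succ m hNm ih =>
    by_cases hpm : p m
    · exact ⟨m, hNm, hpm, hm⟩
    · exact ih hpm

theorem Set.Infinite.image_of_tendsto_of_ne {A : Type*} [TopologicalSpace A] [T1Space A]
    {a : ℕ → A} {b : A} (hlim : Tendsto a atTop (𝓝 b)) (ha : ∀ n, a n ≠ b) {S : Set ℕ}
    (hS : S.Infinite) : (a '' S).Infinite := by
  intro himage
  refine hS ((himage.preimage' fun v hv => ?_).subset (subset_preimage_image a S))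
  obtain ⟨n, -, rfl⟩ := hv
  have hfiber := hlim.eventually_ne (ha n).symm
  rw [← Nat.cofinite_eq_atTop, eventually_cofinite] at hfiber
  simp only [ne_eq, not_not] at hfiber
  exact hfiber

theorem finite_range_ccComparison (s : TensorProduct ℤ C_c(X, ℤ) A) :
    (range (ccComparison X A s)).Finite := by
  induction s using TensorProduct.induction_on with
  | zero =>
    rw [map_zero]
    exact (finite_singleton 0).subset (range_subset_iff.2 fun _ => rfl)
  | tmul f b =>
    have hf : (range f).Finite :=
      (f.hasCompactSupport.isCompact_range f.continuous).finite_of_discrete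
    refine (hf.image (· • b)).subset ?_
    rintro _ ⟨y, rfl⟩
    exact ⟨f y, mem_range_self y, rfl⟩
  | add s t hs ht =>
    refine (hs.add ht).subset ?_
    rintro _ ⟨y, rfl⟩
    rw [map_add]
    exact add_mem_add (mem_range_self y) (mem_range_self y)

section Shells

variable {X A : Type*} {U : ℕ → Set X} {x : X}

theorem exists_mem_shell_of_ne (hU : Antitone U) (hUinter : ⋂ n, U n = {x}) {N : ℕ} {y : X}
    (hy : y ∈ U N) (hyx : y ≠ x) : ∃ n, N ≤ n ∧ y ∈ U n \ U (n + 1) := by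
  have hy' : y ∉ ⋂ n, U n := by rwa [hUinter]
  obtain ⟨m, hym⟩ : ∃ m, y ∉ U m := by simpa using hy'
  exact Nat.exists_ge_and_not_succ_of_le (le_max_right m N) hy
    fun h => hym (hU (le_max_left m N) h)

variable [AddCommMonoid A]

noncomputable def shellFunction (U : ℕ → Set X) (a : ℕ → A) (y : X) : A :=
  ∑ᶠ n, (U n \ U (n + 1)).indicator (fun _ => a n) y

variable {a : ℕ → A}

theorem shellFunction_eq_of_mem (hU : Antitone U) {n : ℕ} {y : X} (hy : y ∈ U n \ U (n + 1)) :
    shellFunction U a y = a n := by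
  rw [shellFunction, finsum_eq_single _ n, indicator_of_mem hy]
  intro m hmn
  refine indicator_of_notMem (fun hym => ?_) _
  rcases hmn.lt_or_gt with hmn | hnm
  · exact hym.2 (hU hmn hy.1)
  · exact hy.2 (hU hnm hym.1)

theorem shellFunction_eq_zero {y : X} (hy : ∀ n, y ∉ U n \ U (n + 1)) :
    shellFunction U a y = 0 :=
  finsum_eq_zero_of_forall_eq_zero fun n => indicator_of_notMem (hy n) _

theorem shellFunction_eq_zero_of_forall_mem {y : X} (hy : ∀ n, y ∈ U n) :
    shellFunction U a y = 0 :=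
  shellFunction_eq_zero fun _ hyn => hyn.2 (hy _)

theorem shellFunction_eq_zero_of_notMem (hU : Antitone U) {y : X} (hy : y ∉ U 0) :
    shellFunction U a y = 0 :=
  shellFunction_eq_zero fun n hyn => hy (hU n.zero_le hyn.1)

theorem image_subset_range_shellFunction (hU : Antitone U) :
    a '' {n | (U n \ U (n + 1)).Nonempty} ⊆ range (shellFunction U a) := by
  rintro _ ⟨n, ⟨y, hy⟩, rfl⟩
  exact ⟨y, shellFunction_eq_of_mem hU hy⟩

variable [TopologicalSpace X]

theorem infinite_setOf_shell_nonempty (hU : Antitone U) (hUopen : ∀ n, IsOpen (U n))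
    (hUinter : ⋂ n, U n = {x}) (hx : ¬ IsOpen ({x} : Set X)) :
    {n | (U n \ U (n + 1)).Nonempty}.Infinite := by
  refine infinite_of_forall_exists_gt fun N => ?_
  obtain ⟨y, hy, hyx⟩ : ∃ y ∈ U (N + 1), y ≠ x := by
    by_contra! h
    have hxU : x ∈ U (N + 1) := mem_iInter.1 (hUinter.ge rfl) _
    exact hx (eq_singleton_iff_unique_mem.2 ⟨hxU, h⟩ ▸ hUopen (N + 1))
  obtain ⟨n, hn, hyn⟩ := exists_mem_shell_of_ne hU hUinter hy hyx
  exact ⟨n, ⟨y, hyn⟩, hn⟩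

theorem hasCompactSupport_shellFunction (hU : Antitone U) (hU0 : IsCompact (U 0))
    (hU0closed : IsClosed (U 0)) : HasCompactSupport (shellFunction U a) :=
  HasCompactSupport.intro' hU0 hU0closed fun _ => shellFunction_eq_zero_of_notMem hU

variable [TopologicalSpace A]

theorem tendsto_shellFunction (hU : Antitone U) (hUopen : ∀ n, IsOpen (U n))
    (hUinter : ⋂ n, U n = {x}) (ha : Tendsto a atTop (𝓝 0)) :
    Tendsto (shellFunction U a) (𝓝 x) (𝓝 0) := by
  have hxU : ∀ n, x ∈ U n := mem_iInter.1 (hUinter.ge rfl)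
  intro W hW
  obtain ⟨N, hN⟩ := eventually_atTop.1 (ha hW)
  refine mem_map.2 <| mem_of_superset ((hUopen N).mem_nhds (hxU N)) fun y hy => ?_
  by_cases hyx : y = x
  · subst hyx
    rw [mem_preimage, shellFunction_eq_zero_of_forall_mem hxU]
    exact mem_of_mem_nhds hW
  · obtain ⟨n, hn, hyn⟩ := exists_mem_shell_of_ne hU hUinter hy hyx
    rw [mem_preimage, shellFunction_eq_of_mem hU hyn]
    exact hN n hn

theorem continuous_shellFunction (hU : Antitone U) (hUclopen : ∀ n, IsClopen (U n))
    (hUinter : ⋂ n, U n = {x}) (ha : Tendsto a atTop (𝓝 0)) :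
    Continuous (shellFunction U a) := by
  refine continuous_iff_continuousAt.2 fun y => ?_
  by_cases hyx : y = x
  · subst hyx
    rw [ContinuousAt, shellFunction_eq_zero_of_forall_mem (mem_iInter.1 (hUinter.ge rfl))]
    exact tendsto_shellFunction hU (fun n => (hUclopen n).isOpen) hUinter ha
  by_cases hy0 : y ∈ U 0
  · obtain ⟨n, -, hyn⟩ := exists_mem_shell_of_ne hU hUinter hy0 hyx
    have hshell : IsOpen (U n \ U (n + 1)) := (hUclopen n).isOpen.sdiff (hUclopen _).isClosed
    exact continuousAt_const.congr <| eventuallyEq_of_mem (hshell.mem_nhds hyn)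
      fun z hz => (shellFunction_eq_of_mem hU hz).symm
  · exact continuousAt_const.congr <|
      eventuallyEq_of_mem ((hUclopen 0).isClosed.isOpen_compl.mem_nhds hy0)
      fun z hz => (shellFunction_eq_zero_of_notMem hU hz).symm

end Shells

theorem ccComparison_not_surjective_general {X A : Type*} [TopologicalSpace X]
    [T2Space X]
    (x : X) (hx : ¬ IsOpen ({x} : Set X))
    (U : ℕ → Set X)
    (hUco : ∀ n, IsCompact (U n) ∧ IsOpen (U n))
    (hUdec : ∀ n, U (n + 1) ⊆ U n)
    (hUinter : ⋂ n, U n = {x})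
    [AddCommGroup A] [TopologicalSpace A] [IsTopologicalAddGroup A] [T2Space A]
    (a : ℕ → A) (ha : ∀ n, a n ≠ 0)
    (hlim : Filter.Tendsto a Filter.atTop (nhds 0)) :
    ¬ Function.Surjective (ccComparison X A) := by
  intro hsurj
  have hU : Antitone U := antitone_nat_of_succ_le hUdec
  have hUclopen n : IsClopen (U n) := ⟨(hUco n).1.isClosed, (hUco n).2⟩
  let g : C_c(X, A) :=
    ⟨⟨shellFunction U a, continuous_shellFunction hU hUclopen hUinter hlim⟩,
      hasCompactSupport_shellFunction hU (hUco 0).1 (hUclopen 0).isClosed⟩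
  obtain ⟨s, hs⟩ := hsurj g
  have hfinite : (range g).Finite := hs ▸ finite_range_ccComparison X A s
  have hinfinite := (infinite_setOf_shell_nonempty hU (fun n => (hUco n).2) hUinter
    hx).image_of_tendsto_of_ne hlim ha
  exact hinfinite (hfinite.subset (image_subset_range_shellFunction hU))

/-- **Corollary 3.2.7.** Let `X` be a non-discrete locally compact, totally disconnected
Hausdorff space with a basis of compact open sets, admitting a non-isolated point `x`
together with a decreasing sequence `U n` of compact open neighbourhoods of `x` with
`⋂ n, U n = {x}`. Let `A` be a Hausdorff topological abelian group admitting a sequence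
`a n ≠ 0` with `a n → 0`. Then the canonical comparison map
`Φ_X : C_c(X, ℤ) ⊗_ℤ A → C_c(X, A)` is not surjective. -/
theorem ccComparison_not_surjective {X A : Type*} [TopologicalSpace X]
    [LocallyCompactSpace X] [T2Space X] [TotallyDisconnectedSpace X]
    (hnotdisc : ¬ DiscreteTopology X)
    (hbasis : ∀ y : X, ∀ U : Set X, IsOpen U → y ∈ U →
      ∃ V : Set X, IsCompact V ∧ IsOpen V ∧ y ∈ V ∧ V ⊆ U)
    (x : X) (hx : ¬ IsOpen ({x} : Set X))
    (U : ℕ → Set X)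
    (hUco : ∀ n, IsCompact (U n) ∧ IsOpen (U n))
    (hUx : ∀ n, x ∈ U n)
    (hUdec : ∀ n, U (n + 1) ⊆ U n)
    (hUinter : ⋂ n, U n = {x})
    [AddCommGroup A] [TopologicalSpace A] [IsTopologicalAddGroup A] [T2Space A]
    (a : ℕ → A) (ha : ∀ n, a n ≠ 0)
    (hlim : Filter.Tendsto a Filter.atTop (nhds 0)) :
    ¬ Function.Surjective (ccComparison X A) :=
  ccComparison_not_surjective_general x hx U hUco hUdec hUinter a ha hlim
end

section
/- Let X be a locally compact Hausdorff space, A a topological abelian group, and X₁, X₂ ⊆ X clopen subsets with X = X₁ ∪ X₂; set X₁₂ := X₁ ∩ X₂. Define α : C_c(X₁₂, A) → C_c(X₁, A) ⊕ C_c(X₂, A) by α(ζ) := (ζ^{(1)}, −ζ^{(2)}), where ζ^{(i)} denotes extension by zero along the clopen inclusion X₁₂ ⊆ X_i, and define β : C_c(X₁, A) ⊕ C_c(X₂, A) → C_c(X, A) by β(ζ₁, ζ₂) := ζ̃₁ + ζ̃₂, where ζ̃_i denotes extension by zero along the clopen inclusion X_i ⊆ X. Then the sequence 0 → C_c(X₁₂,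 A) →^α C_c(X₁, A) ⊕ C_c(X₂, A) →^β C_c(X, A) → 0 is exact: α is injective, the kernel of β equals the image of α, and β is surjective. (Lemma 3.3.8.) -/
/-!
Everything reduces to bookkeeping with extension by zero, which is injective and transitive
along `S ⊆ T ⊆ X`. If `ζ̃₁ + ζ̃₂ = 0`, then `ζ̃₁ = -ζ̃₂` is supported in `X₁ ∩ X₂`, so both
`ζ₁` and `ζ₂` are extensions of the restriction `ζ` of `ζ₁` to the closed set `X₁ ∩ X₂`,
which is again continuous with compact support. For surjectivity, split
`η = 1_{X₁} η + 1_{X₁ᶜ} η`; since `X₁` is clopen both pieces are continuous, and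
`X₁ᶜ ⊆ X₂` by the covering hypothesis.
-/

open Set Function Classical

noncomputable section
open scoped Classical

/-- Extension by zero of a function defined on a subset `S ⊆ X` to all of `X`. -/
noncomputable def extendZero {X A : Type*} [Zero A] (S : Set X) (g : S → A) : X → A :=
  fun x => if h : x ∈ S then g ⟨x, h⟩ else 0

/-- Extension by zero of a function defined on a subset `S ⊆ X` to a larger subset
`T ⊆ X`. -/
noncomputable def extendZeroIn {X A : Type*} [Zero A] (S T : Set X) (g : S → A) : T → A :=
  fun x => if h : (x : X) ∈ S then g ⟨x, h⟩ else 0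

section ExtendByZero

variable {X A : Type*} {S T : Set X}

section Zero

variable [Zero A]

lemma extendZero_injective (S : Set X) : Injective (extendZero (A := A) S) := by
  intro g g' h
  funext x
  simpa [extendZero] using congrFun h x

lemma support_extendZero_subset (g : S → A) : support (extendZero S g) ⊆ S := by
  intro x hx
  by_contra hxS
  exact hx (dif_neg hxS)

lemma extendZero_extendZeroIn (h : S ⊆ T) (g : S → A) :
    extendZero T (extendZeroIn S T g) = extendZero S g := by
  funext x
  by_cases hxS : x ∈ S
  · simp [extendZero, extendZeroIn, hxS, h hxS]
  · simp [extendZero, extendZeroIn, hxS]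

lemma extendZeroIn_injective (h : S ⊆ T) : Injective (extendZeroIn (A := A) S T) :=
  fun g g' e => extendZero_injective S <| by
    rw [← extendZero_extendZeroIn h, e, extendZero_extendZeroIn h]

@[simp]
lemma extendZeroIn_zero : extendZeroIn S T (0 : S → A) = 0 := by
  funext x
  simp [extendZeroIn]

lemma extendZeroIn_eq_zero_iff (h : S ⊆ T) {g : S → A} : extendZeroIn S T g = 0 ↔ g = 0 :=
  (extendZeroIn_injective h).eq_iff' extendZeroIn_zero

lemma extendZeroIn_comp_inclusion (h : S ⊆ T) (g : S → A) :
    extendZeroIn S T g ∘ inclusion h = g := by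
  funext x
  simp [extendZeroIn]

lemma extendZero_domRestrict (S : Set X) (f : X → A) :
    extendZero S (S.domRestrict f) = S.indicator f := by
  funext x
  by_cases hx : x ∈ S <;> simp [extendZero, hx]

lemma domRestrict_extendZero_of_subset (h : S ⊆ T) (g : T → A) :
    S.domRestrict (extendZero T g) = g ∘ inclusion h := by
  funext x
  simp [extendZero, h x.2, inclusion]

lemma eq_extendZeroIn_of_support_subset (h : S ⊆ T) {g : T → A}
    (hg : support (extendZero T g) ⊆ S) : g = extendZeroIn S T (g ∘ inclusion h) := by
  apply extendZero_injective T
  rw [extendZero_extendZeroIn h, ← domRestrict_extendZero_of_subset h, extendZero_domRestrict,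
    indicator_eq_self.2 hg]

end Zero

lemma extendZero_neg [NegZeroClass A] (g : S → A) : extendZero S (-g) = -extendZero S g := by
  funext x
  by_cases hx : x ∈ S <;> simp [extendZero, hx]

lemma extendZero_add_extendZero_eq_zero_iff [AddGroup A] (g₁ : S → A) (g₂ : T → A) :
    extendZero S g₁ + extendZero T g₂ = 0 ↔
      g₁ = extendZeroIn (S ∩ T) S (g₁ ∘ inclusion inter_subset_left) ∧
        g₂ = -extendZeroIn (S ∩ T) T (g₁ ∘ inclusion inter_subset_left) := by
  set ζ := g₁ ∘ inclusion (inter_subset_left : S ∩ T ⊆ S)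
  constructor
  · intro hsum
    have hsupp : support (extendZero S g₁) ⊆ T := by
      rw [eq_neg_of_add_eq_zero_left hsum, support_neg]
      exact support_extendZero_subset g₂
    have hg₁ : g₁ = extendZeroIn (S ∩ T) S ζ :=
      eq_extendZeroIn_of_support_subset inter_subset_left
        (subset_inter (support_extendZero_subset g₁) hsupp)
    refine ⟨hg₁, extendZero_injective T ?_⟩
    calc extendZero T g₂ = -extendZero S g₁ := eq_neg_of_add_eq_zero_right hsum
      _ = -extendZero (S ∩ T) ζ := by rw [hg₁, extendZero_extendZeroIn inter_subset_left]
      _ = extendZero T (-extendZeroIn (S ∩ T) T ζ) := by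
        rw [extendZero_neg, extendZero_extendZeroIn inter_subset_right]
  · rintro ⟨hg₁, rfl⟩
    rw [extendZero_neg, extendZero_extendZeroIn inter_subset_right,
      ← extendZero_extendZeroIn inter_subset_left, ← hg₁, add_neg_cancel]

end ExtendByZero

section CompactSupport

variable {X A : Type*} [TopologicalSpace X] [Zero A] {S T : Set X}

lemma HasCompactSupport.domRestrict {f : X → A} (hf : HasCompactSupport f) (hS : IsClosed S) :
    HasCompactSupport (S.domRestrict f) :=
  hf.comp_isClosedEmbedding hS.isClosedEmbedding_subtypeVal

lemma HasCompactSupport.comp_inclusion {g : T → A} (hg : HasCompactSupport g) (h : S ⊆ T)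
    (hS : IsClosed S) : HasCompactSupport (g ∘ inclusion h) :=
  hg.comp_isClosedEmbedding (.inclusion h (hS.preimage continuous_subtype_val))

end CompactSupport

theorem clopen_mayerVietoris_exact_general {X A : Type*} [TopologicalSpace X]
    [AddCommGroup A] [TopologicalSpace A]
    (X₁ X₂ : Set X) (h₁ : IsClopen X₁) (h₂ : IsClopen X₂) (hcover : X₁ ∪ X₂ = Set.univ) :
    -- α is injective
    (∀ ζ : (X₁ ∩ X₂ : Set X) → A, Continuous ζ → HasCompactSupport ζ →
        extendZeroIn (X₁ ∩ X₂) X₁ ζ = 0 → -(extendZeroIn (X₁ ∩ X₂) X₂ ζ) = 0 →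
        ζ = 0) ∧
    -- ker β = im α
    (∀ (ζ₁ : X₁ → A) (ζ₂ : X₂ → A), Continuous ζ₁ → HasCompactSupport ζ₁ →
        Continuous ζ₂ → HasCompactSupport ζ₂ →
        (extendZero X₁ ζ₁ + extendZero X₂ ζ₂ = 0 ↔
          ∃ ζ : (X₁ ∩ X₂ : Set X) → A, Continuous ζ ∧ HasCompactSupport ζ ∧
            ζ₁ = extendZeroIn (X₁ ∩ X₂) X₁ ζ ∧
            ζ₂ = -(extendZeroIn (X₁ ∩ X₂) X₂ ζ))) ∧
    -- β is surjective
    (∀ η : X → A, Continuous η → HasCompactSupport η →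
        ∃ (ζ₁ : X₁ → A) (ζ₂ : X₂ → A),
          Continuous ζ₁ ∧ HasCompactSupport ζ₁ ∧ Continuous ζ₂ ∧ HasCompactSupport ζ₂ ∧
          extendZero X₁ ζ₁ + extendZero X₂ ζ₂ = η) := by
  refine ⟨fun ζ _ _ hζ _ => (extendZeroIn_eq_zero_iff inter_subset_left).1 hζ, ?_, ?_⟩
  · intro ζ₁ ζ₂ hc₁ hs₁ _ _
    rw [extendZero_add_extendZero_eq_zero_iff]
    constructor
    · exact fun h => ⟨_, hc₁.comp (continuous_inclusion _),
        hs₁.comp_inclusion _ (h₁.isClosed.inter h₂.isClosed), h⟩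
    · rintro ⟨ζ, -, -, rfl, rfl⟩
      simp only [extendZeroIn_comp_inclusion, and_self]
  · intro η hc hs
    have hη₂ : Continuous (X₁ᶜ.indicator η) := h₁.compl.continuous_indicator hc
    have hs₂ : HasCompactSupport (X₁ᶜ.indicator η) :=
      hs.mono (support_indicator.trans_subset inter_subset_right)
    refine ⟨X₁.domRestrict η, X₂.domRestrict (X₁ᶜ.indicator η), hc.continuousOn.domRestrict,
      hs.domRestrict h₁.isClosed, hη₂.continuousOn.domRestrict, hs₂.domRestrict h₂.isClosed, ?_⟩
    rw [extendZero_domRestrict, extendZero_domRestrict, indicator_indicator,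
      inter_eq_right.2 (compl_subset_iff_union.2 hcover), indicator_self_add_compl]

/-- **Lemma 3.3.8** (clopen Mayer–Vietoris for compactly supported chains). Let `X` be a
locally compact Hausdorff space, `A` a topological abelian group, and `X₁, X₂ ⊆ X` clopen
with `X = X₁ ∪ X₂`; set `X₁₂ = X₁ ∩ X₂`. With `α(ζ) = (ζ⁽¹⁾, -ζ⁽²⁾)` (extensions by zero
along `X₁₂ ⊆ Xᵢ`) and `β(ζ₁, ζ₂) = ζ̃₁ + ζ̃₂` (extensions by zero along `Xᵢ ⊆ X`), the
sequence `0 → C_c(X₁₂, A) → C_c(X₁, A) ⊕ C_c(X₂, A) → C_c(X, A) → 0` is exact: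
`α` is injective, `ker β = im α`, and `β` is surjective. -/
theorem clopen_mayerVietoris_exact {X A : Type*} [TopologicalSpace X]
    [LocallyCompactSpace X] [T2Space X]
    [AddCommGroup A] [TopologicalSpace A] [IsTopologicalAddGroup A]
    (X₁ X₂ : Set X) (h₁ : IsClopen X₁) (h₂ : IsClopen X₂) (hcover : X₁ ∪ X₂ = Set.univ) :
    -- α is injective
    (∀ ζ : (X₁ ∩ X₂ : Set X) → A, Continuous ζ → HasCompactSupport ζ →
        extendZeroIn (X₁ ∩ X₂) X₁ ζ = 0 → -(extendZeroIn (X₁ ∩ X₂) X₂ ζ) = 0 →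
        ζ = 0) ∧
    -- ker β = im α
    (∀ (ζ₁ : X₁ → A) (ζ₂ : X₂ → A), Continuous ζ₁ → HasCompactSupport ζ₁ →
        Continuous ζ₂ → HasCompactSupport ζ₂ →
        (extendZero X₁ ζ₁ + extendZero X₂ ζ₂ = 0 ↔
          ∃ ζ : (X₁ ∩ X₂ : Set X) → A, Continuous ζ ∧ HasCompactSupport ζ ∧
            ζ₁ = extendZeroIn (X₁ ∩ X₂) X₁ ζ ∧
            ζ₂ = -(extendZeroIn (X₁ ∩ X₂) X₂ ζ))) ∧
    -- β is surjective
    (∀ η : X → A, Continuous η → HasCompactSupport η →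
        ∃ (ζ₁ : X₁ → A) (ζ₂ : X₂ → A),
          Continuous ζ₁ ∧ HasCompactSupport ζ₁ ∧ Continuous ζ₂ ∧ HasCompactSupport ζ₂ ∧
          extendZero X₁ ζ₁ + extendZero X₂ ζ₂ = η) :=
  clopen_mayerVietoris_exact_general X₁ X₂ h₁ h₂ hcover
end
end
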